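/- arXiv:1202.4027 — 4 statements merged into one kernel-verified Lean document; each statement's English description precedes it below -/
import Mathlib

section
/- For λ < 0 and d ∈ ℝ with d ≠ 0, the integral ∫₀^∞ e^{λt} t^{-3/2} e^{-d²/(4t)} dt equals 2√π/|d| · e^{-|d|√(-λ)}. -/
open Real MeasureTheory Set

lemma img1 (a : ℝ) (ha : 0 < a) : (fun v => a / v) '' Ioi (0:ℝ) = Ioi 0 := by
  ext x
  constructor
  · rintro ⟨v, hv, rfl⟩; exact div_pos ha hv
  · intro hx; exact ⟨a / x, div_pos ha hx, by field_simp⟩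

lemma img2 (a : ℝ) (ha : 0 < a) : (fun u => u - a / u) '' Ioi (0:ℝ) = univ := by
  apply eq_univ_of_forall
  intro w
  set s := Real.sqrt (w ^ 2 + 4 * a) with hs_def
  have hs2 : s ^ 2 = w ^ 2 + 4 * a := Real.sq_sqrt (by positivity)
  have hsw : |w| < s := by
    have : Real.sqrt (w ^ 2) < s := by
      apply Real.sqrt_lt_sqrt (by positivity); linarith
    simpa [Real.sqrt_sq_eq_abs] using this
  have h1 : -s < w := neg_lt_of_abs_lt hsw
  have hu : 0 < (w + s) / 2 := by linarith
  refine ⟨(w + s) / 2, hu, ?_⟩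
  have hws : w + s ≠ 0 := by intro h; rw [h] at hu; simp at hu
  field_simp
  nlinarith [hs2]

lemma gint (a : ℝ) (ha : 0 < a) :
    IntegrableOn (fun u : ℝ => Real.exp (-(u ^ 2 + a ^ 2 / u ^ 2))) (Ioi 0) := by
  apply Integrable.mono' (g := fun u : ℝ => Real.exp (-1 * u ^ 2))
  · exact (integrable_exp_neg_mul_sq one_pos).integrableOn
  · apply ContinuousOn.aestronglyMeasurable _ measurableSet_Ioi
    apply ContinuousOn.rexp
    apply ContinuousOn.neg
    apply ContinuousOn.add (continuousOn_pow 2)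
    exact ContinuousOn.div continuousOn_const (continuousOn_pow 2)
      (fun x hx => pow_ne_zero 2 (ne_of_gt hx))
  · filter_upwards [self_mem_ae_restrict measurableSet_Ioi] with u hu
    rw [Real.norm_eq_abs, abs_of_pos (Real.exp_pos _)]
    apply Real.exp_le_exp.mpr
    have : 0 ≤ a ^ 2 / u ^ 2 := by positivity
    linarith

lemma glasser (a : ℝ) (ha : 0 < a) :
    ∫ u in Ioi (0:ℝ), Real.exp (-(u ^ 2 + a ^ 2 / u ^ 2))
      = Real.sqrt π / 2 * Real.exp (-2 * a) := by
  set g : ℝ → ℝ := fun u => Real.exp (-(u ^ 2 + a ^ 2 / u ^ 2)) with hg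
  -- step 1 : symmetry
  have h1 : ∫ v in Ioi (0:ℝ), (a / v ^ 2) * g v = ∫ u in Ioi (0:ℝ), g u := by
    have hanti : StrictAntiOn (fun v => a / v) (Ioi (0:ℝ)) := by
      intro u hu v hv huv
      exact div_lt_div_of_pos_left ha (mem_Ioi.mp hu) huv
    have key := integral_image_eq_integral_abs_deriv_smul measurableSet_Ioi
      (f := fun v => a / v) (f' := fun v => a * -((v:ℝ) ^ 2)⁻¹)
      (fun v hv => by
        simpa [div_eq_mul_inv] using
          ((hasDerivAt_inv (ne_of_gt (mem_Ioi.mp hv))).const_mul a).hasDerivWithinAt) 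
      hanti.injOn g
    rw [img1 a ha] at key
    rw [key]
    apply setIntegral_congr_fun measurableSet_Ioi
    intro v hv
    have hv0 : (0:ℝ) < v := mem_Ioi.mp hv
    have habs : |a * -((v:ℝ) ^ 2)⁻¹| = a / v ^ 2 := by
      rw [abs_mul, abs_neg, abs_inv, abs_of_pos ha, abs_of_pos (pow_pos hv0 2),
        div_eq_mul_inv]
    simp only [smul_eq_mul, hg]
    rw [habs]
    congr 2
    field_simp
    ring
  -- step 2 : substitution w = u - a/u
  have h2 : ∫ w : ℝ, Real.exp (-w ^ 2 - 2 * a)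
      = ∫ u in Ioi (0:ℝ), (1 + a / u ^ 2) * g u := by
    have hmono : StrictMonoOn (fun u => u - a / u) (Ioi (0:ℝ)) := by
      intro u hu v hv huv
      have : a / v < a / u := div_lt_div_of_pos_left ha (mem_Ioi.mp hu) huv
      simp only
      linarith
    have key := integral_image_eq_integral_abs_deriv_smul measurableSet_Ioi
      (f := fun u => u - a / u) (f' := fun u => 1 - a * -((u:ℝ) ^ 2)⁻¹)
      (fun u hu => by
        simpa [div_eq_mul_inv, Pi.sub_def] using
          ((hasDerivAt_id' u).sub
            ((hasDerivAt_inv (ne_of_gt (mem_Ioi.mp hu))).const_mul a)).hasDerivWithinAt)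
      hmono.injOn (fun w => Real.exp (-w ^ 2 - 2 * a))
    rw [img2 a ha, MeasureTheory.setIntegral_univ] at key
    rw [key]
    apply setIntegral_congr_fun measurableSet_Ioi
    intro u hu
    have hu0 : (0:ℝ) < u := mem_Ioi.mp hu
    have habs : |1 - a * -((u:ℝ) ^ 2)⁻¹| = 1 + a / u ^ 2 := by
      rw [abs_of_pos]
      · rw [div_eq_mul_inv]; ring
      · have : 0 < a * ((u:ℝ) ^ 2)⁻¹ := by positivity
        nlinarith
    simp only [smul_eq_mul, hg]
    rw [habs]
    congr 2
    field_simp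
    ring
  -- split the RHS of h2
  have hint2 : IntegrableOn (fun v : ℝ => (a / v ^ 2) * g v) (Ioi 0) := by
    have hanti : StrictAntiOn (fun v => a / v) (Ioi (0:ℝ)) := by
      intro u hu v hv huv
      exact div_lt_div_of_pos_left ha (mem_Ioi.mp hu) huv
    have key := integrableOn_image_iff_integrableOn_abs_deriv_smul measurableSet_Ioi
      (f := fun v => a / v) (f' := fun v => a * -((v:ℝ) ^ 2)⁻¹)
      (fun v hv => by
        simpa [div_eq_mul_inv] using
          ((hasDerivAt_inv (ne_of_gt (mem_Ioi.mp hv))).const_mul a).hasDerivWithinAt)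
      hanti.injOn g
    rw [img1 a ha] at key
    have := key.mp (gint a ha)
    apply this.congr_fun _ measurableSet_Ioi
    intro v hv
    have hv0 : (0:ℝ) < v := mem_Ioi.mp hv
    have habs : |a * -((v:ℝ) ^ 2)⁻¹| = a / v ^ 2 := by
      rw [abs_mul, abs_neg, abs_inv, abs_of_pos ha, abs_of_pos (pow_pos hv0 2),
        div_eq_mul_inv]
    simp only [smul_eq_mul, hg]
    rw [habs]
    congr 2
    field_simp
    ring
  have hsplit : ∫ u in Ioi (0:ℝ), (1 + a / u ^ 2) * g u
      = (∫ u in Ioi (0:ℝ), g u) + ∫ u in Ioi (0:ℝ), (a / u ^ 2) * g u := by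
    rw [← integral_add (gint a ha) hint2]
    apply setIntegral_congr_fun measurableSet_Ioi
    intro u hu
    ring
  -- LHS of h2
  have hlhs : ∫ w : ℝ, Real.exp (-w ^ 2 - 2 * a) = Real.sqrt π * Real.exp (-2 * a) := by
    have : ∀ w : ℝ, Real.exp (-w ^ 2 - 2 * a) = Real.exp (-1 * w ^ 2) * Real.exp (-2 * a) := by
      intro w; rw [← Real.exp_add]; ring_nf
    simp_rw [this]
    rw [integral_mul_const, integral_gaussian]
    norm_num
  rw [hlhs, hsplit, h1] at h2
  linarith

lemma img3 (a : ℝ) (ha : 0 < a) : (fun u => a / u ^ 2) '' Ioi (0:ℝ) = Ioi 0 := by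
  ext x
  constructor
  · rintro ⟨v, hv, rfl⟩; exact div_pos ha (pow_pos hv 2)
  · intro hx
    refine ⟨Real.sqrt (a / x), Real.sqrt_pos.mpr (div_pos ha hx), ?_⟩
    simp only
    rw [Real.sq_sqrt (le_of_lt (div_pos ha hx))]
    field_simp


theorem stmt0 (lam d : ℝ) (hlam : lam < 0) (hd : d ≠ 0) :
    ∫ t in Ioi (0:ℝ), Real.exp (lam * t) * t ^ (-(3:ℝ)/2) * Real.exp (-d^2/(4*t))
      = 2 * Real.sqrt π / |d| * Real.exp (-|d| * Real.sqrt (-lam)) := by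
  set b : ℝ := |d| / 2 with hb_def
  have hb : 0 < b := by positivity
  have hd_eq : |d| = 2 * b := by rw [hb_def]; ring
  have hd2 : d ^ 2 = 4 * b ^ 2 := by
    rw [← sq_abs, hd_eq]; ring
  set c : ℝ := Real.sqrt (-lam) with hc_def
  have hc : 0 < c := Real.sqrt_pos.mpr (by linarith)
  have hc2 : lam = -(c ^ 2) := by
    rw [hc_def, Real.sq_sqrt (by linarith : (0:ℝ) ≤ -lam)]; ring
  set G : ℝ → ℝ := fun t => Real.exp (lam * t) * t ^ (-(3:ℝ)/2) * Real.exp (-d^2/(4*t))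
    with hG
  have hanti : StrictAntiOn (fun u => b ^ 2 / u ^ 2) (Ioi (0:ℝ)) := by
    intro u hu v hv huv
    exact div_lt_div_of_pos_left (by positivity) (pow_pos (mem_Ioi.mp hu) 2)
      (by nlinarith [mem_Ioi.mp hu, mem_Ioi.mp hv])
  have key := integral_image_eq_integral_abs_deriv_smul measurableSet_Ioi
    (f := fun u => b ^ 2 / u ^ 2)
    (f' := fun u => b ^ 2 * (-(2 * u ^ 1) / (u ^ 2) ^ 2))
    (fun u hu => by
      have hu0 : (0:ℝ) < u := mem_Ioi.mp hu
      simpa [div_eq_mul_inv] using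
        (((hasDerivAt_pow 2 u).inv (by positivity)).const_mul (b ^ 2)).hasDerivWithinAt)
    hanti.injOn G
  rw [img3 (b ^ 2) (by positivity)] at key
  rw [key]
  have hcong : ∀ u ∈ Ioi (0:ℝ),
      |b ^ 2 * (-(2 * u ^ 1) / (u ^ 2) ^ 2)| • G (b ^ 2 / u ^ 2)
        = 2 / b * Real.exp (-(u ^ 2 + (c * b) ^ 2 / u ^ 2)) := by
    intro u hu
    have hu0 : (0:ℝ) < u := mem_Ioi.mp hu
    have habs : |b ^ 2 * (-(2 * u ^ 1) / (u ^ 2) ^ 2)| = 2 * b ^ 2 / u ^ 3 := by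
      have : b ^ 2 * (-(2 * u ^ 1) / (u ^ 2) ^ 2) = -(2 * b ^ 2 / u ^ 3) := by
        field_simp
      rw [this, abs_neg, abs_of_pos (by positivity)]
    have hrpow : ((b ^ 2 / u ^ 2 : ℝ)) ^ (-(3:ℝ)/2) = u ^ 3 / b ^ 3 := by
      have h1 : (b ^ 2 / u ^ 2 : ℝ) = (b / u) ^ 2 := by ring
      have hbu : (0:ℝ) < b / u := div_pos hb hu0
      rw [h1, ← Real.rpow_natCast (b / u) 2, ← Real.rpow_mul hbu.le]
      norm_num
      rw [div_pow, inv_div]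
    have he1 : lam * (b ^ 2 / u ^ 2) = -((c * b) ^ 2 / u ^ 2) := by
      rw [hc2]; ring
    have he2 : -d ^ 2 / (4 * (b ^ 2 / u ^ 2)) = -u ^ 2 := by
      rw [hd2]; field_simp
    rw [smul_eq_mul, habs, hG]
    simp only
    rw [hrpow, he1, he2]
    have hexp : Real.exp (-((c * b) ^ 2 / u ^ 2)) * Real.exp (-u ^ 2)
        = Real.exp (-(u ^ 2 + (c * b) ^ 2 / u ^ 2)) := by
      rw [← Real.exp_add]; ring_nf
    calc 2 * b ^ 2 / u ^ 3 * (Real.exp (-((c * b) ^ 2 / u ^ 2)) * (u ^ 3 / b ^ 3)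
          * Real.exp (-u ^ 2))
        = 2 / b * (Real.exp (-((c * b) ^ 2 / u ^ 2)) * Real.exp (-u ^ 2)) := by
          field_simp
      _ = 2 / b * Real.exp (-(u ^ 2 + (c * b) ^ 2 / u ^ 2)) := by rw [hexp]
  rw [setIntegral_congr_fun measurableSet_Ioi hcong, integral_const_mul,
    glasser (c * b) (by positivity)]
  rw [show -|d| * c = -2 * (c * b) from by rw [hd_eq]; ring, hd_eq]
  field_simp
end

section
/- For λ < 0, the function θ ↦ (1/(4π sin θ)) · (1/(1−e^{-2π√(-λ)})) · [ −e^{-2π√(-λ)} e^{θ√(-λ)} + e^{-θ√(-λ)} ] − 1/(4πθ) extends continuously to θ = 0 with value −(1/(4π)) · ((1+e^{-2π√(-λ)})/(1−e^{-2π√(-λ)})) · √(-λ), i.e. the limit as θ → 0⁺ of that difference equals −(√(-λ)/(4π)) · coth(π√(-λ)). -/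
open Real Filter Topology

theorem stmt2 (lam : ℝ) (hlam : lam < 0) :
    Filter.Tendsto (fun θ : ℝ =>
        (1/(4*π*Real.sin θ)) * (1/(1 - Real.exp (-2*π*Real.sqrt (-lam)))) *
            (-Real.exp (-2*π*Real.sqrt (-lam)) * Real.exp (θ * Real.sqrt (-lam))
              + Real.exp (-θ * Real.sqrt (-lam)))
          - 1/(4*π*θ))
      (𝓝[>] 0)
      (𝓝 (-(Real.sqrt (-lam)/(4*π)) *
        ((1 + Real.exp (-2*π*Real.sqrt (-lam)))/(1 - Real.exp (-2*π*Real.sqrt (-lam)))))) := by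
  have hπ : (0:ℝ) < π := Real.pi_pos
  set s := Real.sqrt (-lam) with hs_def
  have hs : 0 < s := Real.sqrt_pos.mpr (by linarith)
  set c := Real.exp (-2*π*s) with hc_def
  have hc0 : 0 < c := Real.exp_pos _
  have hc1 : c < 1 := by
    rw [hc_def, Real.exp_lt_one_iff]
    nlinarith
  have h1c : (1:ℝ) - c ≠ 0 := by linarith
  set g : ℝ → ℝ := fun θ => (1/(1-c)) * (-c * Real.exp (θ*s) + Real.exp (-θ*s)) with hg_def
  have hg0 : g 0 = 1 := by
    simp only [hg_def, zero_mul, neg_zero, Real.exp_zero, mul_one]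
    field_simp
    ring
  have hder : HasDerivAt g ((1/(1-c)) * (-c*s + -s)) 0 := by
    have h1 : HasDerivAt (fun θ : ℝ => Real.exp (θ*s)) s 0 := by
      have := ((hasDerivAt_id (0:ℝ)).mul_const s).exp
      simpa using this
    have h2 : HasDerivAt (fun θ : ℝ => Real.exp (-θ*s)) (-s) 0 := by
      have := (((hasDerivAt_id (0:ℝ)).neg).mul_const s).exp
      simpa using this
    have h3 := ((h1.const_mul (-c)).add h2).const_mul (1/(1-c))
    exact h3
  have hA : Tendsto (fun θ : ℝ => (g θ - 1)/θ) (𝓝[>] 0)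
      (𝓝 ((1/(1-c)) * (-c*s + -s))) := by
    have h := hasDerivAt_iff_tendsto_slope.mp hder
    have h' := h.mono_left (nhdsWithin_mono 0 (fun x hx => (ne_of_gt hx : x ≠ 0)))
    refine h'.congr fun θ => ?_
    simp [slope_def_field, hg0]
  have hB : Tendsto (fun θ : ℝ => θ / Real.sin θ) (𝓝[>] 0) (𝓝 1) := by
    have h := hasDerivAt_iff_tendsto_slope.mp (Real.hasDerivAt_sin 0)
    rw [Real.cos_zero] at h
    have h' := h.mono_left (nhdsWithin_mono 0 (fun x hx => (ne_of_gt hx : x ≠ 0)))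
    have h2 : Tendsto (fun θ : ℝ => Real.sin θ / θ) (𝓝[>] 0) (𝓝 1) := by
      refine h'.congr fun θ => ?_
      simp [slope_def_field]
    have h3 := h2.inv₀ one_ne_zero
    simpa [inv_div] using h3
  have hC : Tendsto (fun θ : ℝ => (θ - Real.sin θ)/θ^2) (𝓝[>] 0) (𝓝 0) := by
    have hq : Tendsto (fun θ : ℝ => θ/4) (𝓝[>] (0:ℝ)) (𝓝 0) := by
      have h0 : Tendsto (fun θ : ℝ => θ/4) (𝓝 (0:ℝ)) (𝓝 (0:ℝ)) := by
        simpa using (continuous_id.div_const (4:ℝ)).tendsto 0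
      have := h0.mono_left (nhdsWithin_le_nhds (s := Set.Ioi (0:ℝ)))
      simpa using this
    refine tendsto_of_tendsto_of_tendsto_of_le_of_le' tendsto_const_nhds hq ?_ ?_
    · filter_upwards [self_mem_nhdsWithin] with θ hθ
      have hθ0 : (0:ℝ) < θ := hθ
      have := Real.sin_lt hθ0
      exact div_nonneg (by linarith) (sq_nonneg θ)
    · filter_upwards [Ioo_mem_nhdsGT_of_mem (show (0:ℝ) ∈ Set.Ico 0 1 by norm_num)] with θ hθ
      have h := Real.sin_gt_sub_cube hθ.1
      rw [div_le_iff₀ (pow_pos hθ.1 2)]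
      nlinarith [hθ.1]
  have hmain : Tendsto (fun θ : ℝ => (1/(4*π)) *
      (((g θ - 1)/θ) * (θ/Real.sin θ) + ((θ - Real.sin θ)/θ^2) * (θ/Real.sin θ)))
      (𝓝[>] 0)
      (𝓝 ((1/(4*π)) * (((1/(1-c)) * (-c*s + -s)) * 1 + 0 * 1))) :=
    ((hA.mul hB).add (hC.mul hB)).const_mul _
  have hval : ((1:ℝ)/(4*π)) * (((1/(1-c)) * (-c*s + -s)) * 1 + 0 * 1)
      = -(s/(4*π)) * ((1 + c)/(1 - c)) := by
    field_simp
    ring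
  rw [hval] at hmain
  refine Filter.Tendsto.congr' ?_ hmain
  filter_upwards [Ioo_mem_nhdsGT_of_mem (show (0:ℝ) ∈ Set.Ico 0 1 by norm_num)] with θ hθ
  have hθ0 : θ ≠ 0 := ne_of_gt hθ.1
  have hθπ : θ < π := lt_trans hθ.2 (by linarith [Real.pi_gt_three])
  have hsin : Real.sin θ ≠ 0 := ne_of_gt (Real.sin_pos_of_pos_of_lt_pi hθ.1 hθπ)
  simp only [hg_def]
  field_simp
  ring
end

section
/- For z < 0, the exponential integral Ei(z) := −∫_{−z}^∞ e^{−y}/y dy satisfies Ei(z) = γ + log(−z) + ∑_{k=1}^∞ z^k/(k·k!), where γ is the Euler–Mascheroni constant. -/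
open Real MeasureTheory Set Filter


lemma gamma_int : ∫ t in Ioi (0:ℝ), Real.exp (-t) * Real.log t
    = -Real.eulerMascheroniConstant := by
  have h1 := Complex.hasDerivAt_GammaIntegral (s := 1) (by simp)
  have hJ : (∫ t : ℝ in Ioi 0, (t:ℂ) ^ ((1:ℂ) - 1) * ((Real.log t : ℂ) * (Real.exp (-t) : ℂ)))
      = ((∫ t : ℝ in Ioi 0, Real.exp (-t) * Real.log t : ℝ) : ℂ) := by
    rw [show ((∫ t : ℝ in Ioi 0, Real.exp (-t) * Real.log t : ℝ) : ℂ) = ∫ t : ℝ in Ioi 0, ((Real.exp (-t) * Real.log t : ℝ) : ℂ) from (integral_ofReal).symm]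
    refine setIntegral_congr_fun measurableSet_Ioi (fun t ht => ?_)
    simp [Complex.cpow_zero]
    push_cast
    ring
  rw [hJ] at h1
  have h2 : Complex.Gamma =ᶠ[nhds (1:ℂ)] Complex.GammaIntegral := by
    filter_upwards [(isOpen_lt continuous_const Complex.continuous_re).mem_nhds
      (by norm_num : (0:ℝ) < (1:ℂ).re)] with s hs
    exact Complex.Gamma_eq_integral hs
  have h3 : HasDerivAt Complex.Gamma
      ((∫ t : ℝ in Ioi 0, Real.exp (-t) * Real.log t : ℝ) : ℂ) 1 :=
    h1.congr_of_eventuallyEq h2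
  have h4 : HasDerivAt (fun x : ℝ => (Complex.Gamma (x:ℂ)).re)
      (((∫ t : ℝ in Ioi 0, Real.exp (-t) * Real.log t : ℝ) : ℂ)).re 1 := by
    apply HasDerivAt.real_of_complex
    exact_mod_cast h3
  rw [show (fun x : ℝ => (Complex.Gamma (x:ℂ)).re) = Real.Gamma by
    funext x; rw [Complex.Gamma_ofReal, Complex.ofReal_re]] at h4
  rw [Complex.ofReal_re] at h4
  exact h4.unique Real.hasDerivAt_Gamma_one


lemma intf2 : IntegrableOn (fun y => Real.exp (-y) * Real.log y) (Ioi (0:ℝ)) := by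
  have hmeas : AEStronglyMeasurable (fun y => Real.exp (-y) * Real.log y)
      (volume.restrict (Ioi (0:ℝ))) := by
    refine (ContinuousOn.aestronglyMeasurable ?_ measurableSet_Ioi)
    intro y hy
    exact ((Real.continuous_exp.comp continuous_neg).continuousAt.mul
      (Real.continuousAt_log (ne_of_gt hy))).continuousWithinAt
  have hint : IntegrableOn
      (fun y : ℝ => Real.exp (-y) * y ^ ((2:ℝ) - 1) + 2 * (Real.exp (-y) * y ^ ((1/2:ℝ) - 1)))
      (Ioi (0:ℝ)) :=
    (Real.GammaIntegral_convergent (by norm_num)).add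
      ((Real.GammaIntegral_convergent (by norm_num)).const_mul 2)
  refine hint.mono' hmeas ?_
  filter_upwards [ae_restrict_mem measurableSet_Ioi] with y hy
  have hy0 : (0:ℝ) < y := hy
  have h1 : |Real.log y| ≤ y + 2 * y ^ (-(1/2):ℝ) := by
    rcases le_or_gt 1 y with h | h
    · rw [abs_of_nonneg (Real.log_nonneg h)]
      have := Real.log_le_sub_one_of_pos hy0
      have h2 : (0:ℝ) < y ^ (-(1/2):ℝ) := Real.rpow_pos_of_pos hy0 _
      nlinarith
    · rw [abs_of_nonpos (Real.log_nonpos hy0.le h.le)]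
      have hs : Real.log y = 2 * Real.log (Real.sqrt y) := by
        rw [Real.log_sqrt hy0.le]; ring
      have h3 : Real.log (Real.sqrt y)⁻¹ ≤ (Real.sqrt y)⁻¹ - 1 :=
        Real.log_le_sub_one_of_pos (by positivity)
      rw [Real.log_inv] at h3
      have h4 : (Real.sqrt y)⁻¹ = y ^ (-(1/2):ℝ) := by
        rw [Real.rpow_neg hy0.le, Real.sqrt_eq_rpow]
      nlinarith
  have : |Real.exp (-y) * Real.log y| = Real.exp (-y) * |Real.log y| := by
    rw [abs_mul, abs_of_nonneg (Real.exp_nonneg _)]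
  rw [Real.norm_eq_abs, this]
  have he : (0:ℝ) < Real.exp (-y) := Real.exp_pos _
  have : Real.exp (-y) * |Real.log y| ≤ Real.exp (-y) * (y + 2 * y ^ (-(1/2):ℝ)) := by
    exact mul_le_mul_of_nonneg_left h1 he.le
  refine this.trans (le_of_eq ?_)
  rw [show ((2:ℝ)-1) = 1 by norm_num, show ((1/2:ℝ)-1) = -(1/2) by norm_num,
    Real.rpow_one]
  ring

lemma intf1 {x : ℝ} (hx : 0 < x) :
    IntegrableOn (fun y => Real.exp (-y) / y) (Ioi x) := by
  have hmeas : AEStronglyMeasurable (fun y => Real.exp (-y) / y)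
      (volume.restrict (Ioi x)) := by
    refine (ContinuousOn.aestronglyMeasurable ?_ measurableSet_Ioi)
    intro y hy
    exact ((Real.continuous_exp.comp continuous_neg).continuousAt.div continuousAt_id
      (ne_of_gt (hx.trans hy))).continuousWithinAt
  have hint : IntegrableOn (fun y : ℝ => Real.exp (-1 * y) * x⁻¹) (Ioi x) :=
    (exp_neg_integrableOn_Ioi x zero_lt_one).mul_const _
  refine hint.mono' hmeas ?_
  filter_upwards [ae_restrict_mem measurableSet_Ioi] with y hy
  have hy0 : (0:ℝ) < y := hx.trans hy
  rw [Real.norm_eq_abs, abs_div, abs_of_nonneg (Real.exp_nonneg _), abs_of_pos hy0,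
    neg_one_mul, div_eq_mul_inv]
  exact mul_le_mul_of_nonneg_left (by rw [inv_le_inv₀ hy0 hx]; exact hy.le) (Real.exp_nonneg _)



lemma ibp {x : ℝ} (hx : 0 < x) :
    ∫ y in Ioi x, Real.exp (-y) / y =
      -(Real.exp (-x) * Real.log x) + ∫ y in Ioi x, Real.exp (-y) * Real.log y := by
  have intf2x : IntegrableOn (fun y => Real.exp (-y) * Real.log y) (Ioi x) :=
    intf2.mono_set (Ioi_subset_Ioi hx.le)
  have hder : ∀ y ∈ Ioi x, HasDerivAt (fun y => Real.exp (-y) * Real.log y)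
      (Real.exp (-y) / y - Real.exp (-y) * Real.log y) y := by
    intro y hy
    have hy0 : (0:ℝ) < y := hx.trans hy
    have h1 : HasDerivAt (fun y : ℝ => Real.exp (-y)) (-Real.exp (-y)) y := by
      simpa [Function.comp_def] using ((Real.hasDerivAt_exp (-y)).comp y (hasDerivAt_neg y))
    have h2 : HasDerivAt Real.log y⁻¹ y := Real.hasDerivAt_log (ne_of_gt hy0)
    have := h1.mul h2
    refine this.congr_deriv ?_
    field_simp
    ring
  have hcont : ContinuousWithinAt (fun y => Real.exp (-y) * Real.log y) (Ici x) x :=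
    (((Real.continuous_exp.comp continuous_neg).continuousAt).mul
      (Real.continuousAt_log (ne_of_gt hx))).continuousWithinAt
  have hint : IntegrableOn (fun y => Real.exp (-y) / y - Real.exp (-y) * Real.log y) (Ioi x) :=
    (intf1 hx).sub intf2x
  have htend : Tendsto (fun y => Real.exp (-y) * Real.log y) atTop (nhds 0) := by
    have h0 := Real.tendsto_pow_mul_exp_neg_atTop_nhds_zero 1
    simp only [pow_one] at h0
    refine tendsto_of_tendsto_of_tendsto_of_le_of_le' tendsto_const_nhds h0 ?_ ?_
    · filter_upwards [eventually_ge_atTop (1:ℝ)] with y hy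
      exact mul_nonneg (Real.exp_nonneg _) (Real.log_nonneg hy)
    · filter_upwards [eventually_ge_atTop (1:ℝ)] with y hy
      rw [mul_comm]
      exact mul_le_mul_of_nonneg_right
        ((Real.log_le_sub_one_of_pos (by linarith)).trans (by linarith)) (Real.exp_nonneg _)
  have key := integral_Ioi_of_hasDerivAt_of_tendsto hcont hder hint htend
  rw [integral_sub (intf1 hx) intf2x] at key
  rw [zero_sub] at key
  linarith [key]

lemma split {x : ℝ} (hx : 0 < x) :
    ∫ y in Ioi (0:ℝ), Real.exp (-y) * Real.log y =
      (∫ y in (0:ℝ)..x, Real.exp (-y) * Real.log y)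
        + ∫ y in Ioi x, Real.exp (-y) * Real.log y := by
  rw [intervalIntegral.integral_of_le hx.le]
  rw [← setIntegral_union (Ioc_disjoint_Ioi le_rfl) measurableSet_Ioi
    (intf2.mono_set Ioc_subset_Ioi_self) (intf2.mono_set (Ioi_subset_Ioi hx.le)),
    Ioc_union_Ioi_eq_Ioi hx.le]


noncomputable def gg (u : ℝ) : ℝ := ∑' k : ℕ, u ^ (k + 1) / (((k:ℝ) + 1) * (Nat.factorial (k + 1)))

lemma gg_zero : gg 0 = 0 := by
  simp [gg]

lemma gg_hasDerivAt (u : ℝ) :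
    HasDerivAt gg (∑' k : ℕ, u ^ k / (Nat.factorial (k + 1))) u := by
  set R : ℝ := |u| + 1 with hR
  have hR0 : 0 < R := by positivity
  have hsum : Summable (fun k : ℕ => R ^ k / (Nat.factorial (k + 1))) := by
    refine (Real.summable_pow_div_factorial R).of_nonneg_of_le (fun k => by positivity) ?_
    intro k
    gcongr
    omega
  refine hasDerivAt_tsum_of_isPreconnected (F := ℝ) (𝕜 := ℝ) hsum
    (Metric.isOpen_ball) (convex_ball (0:ℝ) R).isPreconnected
    (g' := fun k y => y ^ k / (Nat.factorial (k + 1))) ?_ ?_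
    (y₀ := 0) (by simpa using by positivity) ?_ ?_
  · intro k y _
    have h1 : HasDerivAt (fun y : ℝ => y ^ (k + 1)) (((k:ℝ) + 1) * y ^ k) y := by
      simpa using hasDerivAt_pow (k+1) y
    have := h1.div_const (((k:ℝ) + 1) * (Nat.factorial (k + 1)))
    refine this.congr_deriv ?_
    have hk : ((k:ℝ) + 1) ≠ 0 := by positivity
    have hf : ((Nat.factorial (k+1) : ℝ)) ≠ 0 := by positivity
    field_simp
  · intro k y hy
    have hyR : |y| ≤ R := by
      have := mem_ball_zero_iff.1 hy
      rw [Real.norm_eq_abs] at this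
      nlinarith [abs_nonneg u]
    rw [Real.norm_eq_abs, abs_div, abs_pow,
      abs_of_nonneg (by positivity : (0:ℝ) ≤ (Nat.factorial (k+1):ℝ))]
    gcongr
  · refine Summable.congr summable_zero (fun k => ?_)
    simp
  · rw [mem_ball_zero_iff, Real.norm_eq_abs]
    nlinarith [abs_nonneg u]

lemma gg_deriv_val {u : ℝ} (hu : u ≠ 0) :
    HasDerivAt gg ((Real.exp u - 1) / u) u := by
  have h1 : HasSum (fun n : ℕ => u ^ n / (Nat.factorial n)) (Real.exp u) :=
    Real.exp_eq_exp_ℝ ▸ NormedSpace.expSeries_div_hasSum_exp u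
  have h2 : HasSum (fun n : ℕ => u ^ (n + 1) / (Nat.factorial (n + 1))) (Real.exp u - 1) := by
    rw [← hasSum_nat_add_iff' 1] at h1
    simpa using h1
  have h3 : HasSum (fun n : ℕ => u ^ n / (Nat.factorial (n + 1))) ((Real.exp u - 1) / u) := by
    have := h2.div_const u
    refine this.congr_fun fun n => ?_
    rw [pow_succ']
    field_simp
  rw [← h3.tsum_eq]
  exact gg_hasDerivAt u



lemma contf2 : ∀ y ∈ Ioi (0:ℝ), ContinuousAt (fun y => Real.exp (-y) * Real.log y) y :=
  fun y hy => ((Real.continuous_exp.comp continuous_neg).continuousAt.mul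
    (Real.continuousAt_log (ne_of_gt hy)))

lemma key {x : ℝ} (hx : 0 < x) :
    ∫ y in (0:ℝ)..x, Real.exp (-y) * Real.log y
      = (1 - Real.exp (-x)) * Real.log x + gg (-x) := by
  set f2 : ℝ → ℝ := fun y => Real.exp (-y) * Real.log y with hf2
  set h : ℝ → ℝ := fun t => (∫ y in (0:ℝ)..t, f2 y) - (1 - Real.exp (-t)) * Real.log t - gg (-t)
    with hh
  -- derivative of h is 0 on Ioi 0
  have hder : ∀ t ∈ Ioi (0:ℝ), HasDerivAt h 0 t := by
    intro t ht
    have ht0 : (0:ℝ) < t := ht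
    have hP : HasDerivAt (fun t => ∫ y in (0:ℝ)..t, f2 y) (f2 t) t := by
      refine intervalIntegral.integral_hasDerivAt_right ?_ ?_ (contf2 t ht0)
      · rw [intervalIntegrable_iff, uIoc_of_le ht0.le]
        exact intf2.mono_set Ioc_subset_Ioi_self
      · exact ContinuousAt.stronglyMeasurableAtFilter isOpen_Ioi contf2 t ht0
    have hE : HasDerivAt (fun t : ℝ => Real.exp (-t)) (-Real.exp (-t)) t := by
      simpa [Function.comp_def] using ((Real.hasDerivAt_exp (-t)).comp t (hasDerivAt_neg t))
    have hQ : HasDerivAt (fun t : ℝ => (1 - Real.exp (-t)) * Real.log t)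
        (Real.exp (-t) * Real.log t + (1 - Real.exp (-t)) * t⁻¹) t := by
      have := ((hasDerivAt_const t (1:ℝ)).sub hE).mul (Real.hasDerivAt_log (ne_of_gt ht0))
      refine this.congr_deriv ?_
      simp only [Pi.sub_apply]
      ring
    have hR : HasDerivAt (fun t : ℝ => gg (-t)) (-((1 - Real.exp (-t)) * t⁻¹)) t := by
      have h1 := (gg_deriv_val (u := -t) (by linarith)).comp t (hasDerivAt_neg t)
      refine h1.congr_deriv ?_
      field_simp [ht0.ne']
      ring
    have := (hP.sub hQ).sub hR
    refine this.congr_deriv ?_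
    ring
  -- h is constant on Ioi 0
  have hconst : ∀ c ∈ Ioi (0:ℝ), h x = h c := by
    intro c hc
    have : ∫ t in c..x, (0:ℝ) = h x - h c := by
      refine intervalIntegral.integral_eq_sub_of_hasDerivAt (fun t ht => ?_) ?_
      · refine hder t ?_
        rcases le_total c x with hcx | hcx
        · rw [uIcc_of_le hcx] at ht; exact lt_of_lt_of_le hc ht.1
        · rw [uIcc_of_ge hcx] at ht; exact lt_of_lt_of_le hx ht.1
      · exact intervalIntegrable_const
    simp only [intervalIntegral.integral_zero] at this
    linarith
  -- limit of h at 0+ is 0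
  have hlim : Tendsto h (nhdsWithin 0 (Ioi (0:ℝ))) (nhds 0) := by
    have hP0 : Tendsto (fun t => ∫ y in (0:ℝ)..t, f2 y) (nhdsWithin 0 (Ioi (0:ℝ))) (nhds 0) := by
      have hint : IntegrableOn f2 (uIcc (0:ℝ) 1) := by
        rw [uIcc_of_le zero_le_one, integrableOn_Icc_iff_integrableOn_Ioc]
        exact intf2.mono_set Ioc_subset_Ioi_self
      have hc := (intervalIntegral.continuousOn_primitive_interval hint) 0
        (by simp [uIcc_of_le (zero_le_one : (0:ℝ) ≤ 1)])
      have h0 : (∫ y in (0:ℝ)..(0:ℝ), f2 y) = 0 := intervalIntegral.integral_same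
      rw [ContinuousWithinAt, h0] at hc
      refine hc.mono_left ?_
      rw [← nhdsWithin_Ioc_eq_nhdsGT (zero_lt_one : (0:ℝ) < 1)]
      refine nhdsWithin_mono 0 ?_
      rw [uIcc_of_le zero_le_one]
      exact Ioc_subset_Icc_self
    have hQ0 : Tendsto (fun t => (1 - Real.exp (-t)) * Real.log t)
        (nhdsWithin 0 (Ioi (0:ℝ))) (nhds 0) := by
      have hml : Tendsto (fun t : ℝ => t * Real.log t) (nhdsWithin 0 (Ioi (0:ℝ))) (nhds 0) := by
        have := Real.continuous_mul_log.continuousAt (x := (0:ℝ))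
        rw [ContinuousAt] at this
        simpa using this.mono_left nhdsWithin_le_nhds
      refine tendsto_of_tendsto_of_tendsto_of_le_of_le' hml tendsto_const_nhds ?_ ?_
      · filter_upwards [Ioc_mem_nhdsGT_of_mem (Set.mem_Ico.2 ⟨le_refl 0, zero_lt_one⟩)]
          with t ht
        have h1 : 1 - Real.exp (-t) ≤ t := by
          have := Real.add_one_le_exp (-t); linarith
        have h2 : Real.log t ≤ 0 := Real.log_nonpos ht.1.le ht.2
        exact mul_le_mul_of_nonpos_right h1 h2
      · filter_upwards [Ioc_mem_nhdsGT_of_mem (Set.mem_Ico.2 ⟨le_refl 0, zero_lt_one⟩)]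
          with t ht
        have h1 : 0 ≤ 1 - Real.exp (-t) := by
          have : Real.exp (-t) ≤ 1 := Real.exp_le_one_iff.2 (by linarith [ht.1])
          linarith
        have h2 : Real.log t ≤ 0 := Real.log_nonpos ht.1.le ht.2
        exact mul_nonpos_of_nonneg_of_nonpos h1 h2
    have hG0 : Tendsto (fun t : ℝ => gg (-t)) (nhdsWithin 0 (Ioi (0:ℝ))) (nhds 0) := by
      have hc : ContinuousAt gg 0 := (gg_hasDerivAt 0).continuousAt
      have h2 : ContinuousAt (fun t : ℝ => gg (-t)) 0 := by
        have : ContinuousAt (fun t : ℝ => -t) 0 := continuous_neg.continuousAt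
        have hc' : ContinuousAt gg (-(0:ℝ)) := by simpa using hc
        simpa [Function.comp_def] using hc'.comp this
      have h3 := h2.tendsto
      simp only [neg_zero, gg_zero] at h3
      exact h3.mono_left nhdsWithin_le_nhds
    have := (hP0.sub hQ0).sub hG0
    simpa using this
  have hx0 : Tendsto (fun _ : ℝ => h x) (nhdsWithin 0 (Ioi (0:ℝ))) (nhds 0) := by
    refine hlim.congr' ?_
    filter_upwards [self_mem_nhdsWithin] with c hc
    exact (hconst c hc).symm
  have hhx : h x = 0 := tendsto_nhds_unique tendsto_const_nhds hx0
  rw [hh] at hhx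
  simp only at hhx
  linarith


theorem stmt8 (z : ℝ) (hz : z < 0) :
    -∫ y in Ioi (-z), Real.exp (-y) / y =
      Real.eulerMascheroniConstant + Real.log (-z)
        + ∑' k : ℕ, z ^ (k + 1) / (((k:ℝ) + 1) * (Nat.factorial (k + 1))) := by
  have hx : (0:ℝ) < -z := neg_pos.2 hz
  have h1 := ibp hx
  have h2 := split hx
  have h3 := gamma_int
  have h4 := key hx
  have hgz : (∑' k : ℕ, z ^ (k + 1) / (((k:ℝ) + 1) * (Nat.factorial (k + 1)))) = gg z := rfl
  rw [hgz]
  have hzz : gg (-(-z)) = gg z := by rw [neg_neg]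
  rw [hzz] at h4
  linarith
end

section
/- Let f : (−∞, −C] → ℂ with f(λ) = 1/(|λ|(log|λ| − κ)) + g(λ) where g is integrable on (−∞, −C] with g(λ) = O(|λ|⁻²), and let C satisfy log C > κ. Then for every s with Re s > 0, ∫_{−∞}^{−C} |λ|^{−s} f(λ) dλ converges absolutely, and s ↦ (sin(πs)/π)∫_{−∞}^{−C}|λ|^{−s} g(λ) dλ extends holomorphically to Re s > −1 with value 0 at s = 0 and derivative ∫_{−∞}^{−C} g(λ) dλ at s = 0. -/
open Real MeasureTheory Set Filter Topology Asymptotics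

lemma aux_indicator_comp_neg {E : Type*} [NormedAddCommGroup E] {f : ℝ → E} {c : ℝ}
    (hf : IntegrableOn f (Iic (-c))) :
    Integrable (Set.indicator (Ici c) (fun t : ℝ => f (-t))) := by
  have h2 := ((integrable_indicator_iff measurableSet_Iic).2 hf).comp_neg
  have heq : (fun t : ℝ => Set.indicator (Iic (-c)) f (-t))
      = Set.indicator (Ici c) (fun t : ℝ => f (-t)) := by
    ext t
    by_cases ht : c ≤ t
    · rw [Set.indicator_of_mem (mem_Iic.2 (by linarith)), Set.indicator_of_mem (mem_Ici.2 ht)]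
    · rw [Set.indicator_of_notMem (by simp [mem_Iic]; linarith),
        Set.indicator_of_notMem (by simpa [mem_Ici] using ht)]
  rwa [heq] at h2

lemma aux_rpow_integrable {a c : ℝ} (ha : a < -1) (hc : 0 < c) :
    IntegrableOn (fun lam : ℝ => |lam| ^ a) (Iic (-c)) := by
  have h1 : IntegrableOn (fun t : ℝ => t ^ a) (Ioi c) := integrableOn_Ioi_rpow_of_lt ha hc
  have h2 := ((integrable_indicator_iff measurableSet_Ioi).2 h1).comp_neg
  have heq : (fun t : ℝ => Set.indicator (Ioi c) (fun x : ℝ => x ^ a) (-t))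
      = Set.indicator (Iio (-c)) (fun lam : ℝ => |lam| ^ a) := by
    ext t
    by_cases ht : c < -t
    · rw [Set.indicator_of_mem (mem_Ioi.2 ht), Set.indicator_of_mem (mem_Iio.2 (by linarith)),
        abs_of_neg (by linarith)]
    · rw [Set.indicator_of_notMem (by simpa [mem_Ioi] using ht),
        Set.indicator_of_notMem (by simp [mem_Iio]; linarith)]
  rw [heq] at h2
  have h3 : IntegrableOn (fun lam : ℝ => |lam| ^ a) (Iio (-c)) :=
    (integrable_indicator_iff measurableSet_Iio).1 h2
  exact h3.congr_set_ae Iio_ae_eq_Iic.symm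

theorem stmt15 (C κ : ℝ) (hC0 : 0 < C) (hκ : κ < Real.log C)
    (f g : ℝ → ℂ)
    (hgint : IntegrableOn g (Iic (-C)))
    (hgO : g =O[Filter.atBot] fun lam : ℝ => 1/lam^2)
    (hf : ∀ lam : ℝ, lam ≤ -C →
      f lam = ((1/(|lam| * (Real.log |lam| - κ)) : ℝ) : ℂ) + g lam) :
    (∀ s : ℂ, 0 < s.re →
      IntegrableOn (fun lam : ℝ => ((|lam| : ℝ) : ℂ) ^ (-s) * f lam) (Iic (-C))) ∧
    ∃ Z : ℂ → ℂ,
      DifferentiableOn ℂ Z {s : ℂ | -1 < s.re} ∧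
      (∀ s : ℂ, -1 < s.re →
        Z s = Complex.sin (π * s) / π * ∫ lam in Iic (-C), ((|lam| : ℝ) : ℂ) ^ (-s) * g lam) ∧
      Z 0 = 0 ∧
      deriv Z 0 = ∫ lam in Iic (-C), g lam := by
  have hπ : (π : ℝ) ≠ 0 := Real.pi_ne_zero
  have hlogC : 0 < Real.log C - κ := sub_pos.2 hκ
  have habs : ∀ lam : ℝ, lam ≤ -C → C ≤ |lam| := by
    intro lam h
    rw [abs_of_neg (by linarith)]; linarith
  have hnorm : ∀ (s : ℂ) (lam : ℝ), lam ≤ -C →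
      ‖((|lam| : ℝ) : ℂ) ^ (-s)‖ = |lam| ^ (-s.re) := by
    intro s lam hlam
    have h0 : 0 < |lam| := lt_of_lt_of_le hC0 (habs lam hlam)
    rw [Complex.norm_cpow_eq_rpow_re_of_pos h0, Complex.neg_re]
  have hcpowm : ∀ s : ℂ, AEStronglyMeasurable (fun lam : ℝ => ((|lam| : ℝ) : ℂ) ^ (-s))
      (volume.restrict (Iic (-C))) := by
    intro s
    apply ContinuousOn.aestronglyMeasurable _ measurableSet_Iic
    intro lam hlam
    have h0 : 0 < |lam| := lt_of_lt_of_le hC0 (habs lam hlam)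
    apply ContinuousAt.continuousWithinAt
    have h1 : ContinuousAt (fun z : ℂ => z ^ (-s)) ((|lam| : ℝ) : ℂ) :=
      continuousAt_cpow_const (by simp [Complex.mem_slitPlane_iff, h0])
    have h2 : ContinuousAt (fun lam : ℝ => ((|lam| : ℝ) : ℂ)) lam :=
      (Complex.continuous_ofReal.comp continuous_abs).continuousAt
    exact ContinuousAt.comp (f := fun lam : ℝ => ((|lam| : ℝ) : ℂ)) h1 h2
  have hgs : ∀ s : ℂ, 0 ≤ s.re →
      IntegrableOn (fun lam : ℝ => ((|lam| : ℝ) : ℂ) ^ (-s) * g lam) (Iic (-C)) := by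
    intro s hs
    apply Integrable.mono' ((hgint.norm).const_mul (C ^ (-s.re)))
    · exact (hcpowm s).mul hgint.aestronglyMeasurable
    · rw [ae_restrict_iff' measurableSet_Iic]
      filter_upwards with lam hlam
      rw [norm_mul, hnorm s lam hlam]
      exact mul_le_mul_of_nonneg_right
        (Real.rpow_le_rpow_of_nonpos hC0 (habs lam hlam) (by linarith)) (norm_nonneg _)
  constructor
  · -- integrability
    intro s hs
    have h1 : IntegrableOn (fun lam : ℝ =>
        ((|lam| : ℝ) : ℂ) ^ (-s) * ((1/(|lam| * (Real.log |lam| - κ)) : ℝ) : ℂ)) (Iic (-C)) := by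
      apply Integrable.mono' ((aux_rpow_integrable (a := -s.re - 1) (by linarith) hC0).const_mul
        ((Real.log C - κ)⁻¹))
      · apply (hcpowm s).mul
        apply Measurable.aestronglyMeasurable
        apply Complex.measurable_ofReal.comp
        exact measurable_const.div
          (measurable_abs.mul ((Real.measurable_log.comp measurable_abs).sub measurable_const))
      · rw [ae_restrict_iff' measurableSet_Iic]
        filter_upwards with lam hlam
        have h0 : 0 < |lam| := lt_of_lt_of_le hC0 (habs lam hlam)
        have hL : Real.log C - κ ≤ Real.log |lam| - κ := by
          have := Real.log_le_log hC0 (habs lam hlam)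
          linarith
        have hLpos : 0 < Real.log |lam| - κ := lt_of_lt_of_le hlogC hL
        rw [norm_mul, hnorm s lam hlam, Complex.norm_real, Real.norm_eq_abs,
          abs_of_pos (div_pos one_pos (mul_pos h0 hLpos))]
        have hb : 1/(|lam| * (Real.log |lam| - κ)) ≤ (Real.log C - κ)⁻¹ * |lam|⁻¹ := by
          rw [one_div, mul_inv]
          rw [mul_comm]
          gcongr
        calc |lam| ^ (-s.re) * (1/(|lam| * (Real.log |lam| - κ)))
            ≤ |lam| ^ (-s.re) * ((Real.log C - κ)⁻¹ * |lam|⁻¹) := by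
              apply mul_le_mul_of_nonneg_left hb (by positivity)
          _ = (Real.log C - κ)⁻¹ * |lam| ^ (-s.re - 1) := by
              rw [Real.rpow_sub h0, Real.rpow_one, div_eq_mul_inv]
              ring
    have h2 := h1.add (hgs s hs.le)
    refine IntegrableOn.congr_fun h2 ?_ measurableSet_Iic
    intro lam hlam
    simp only [Pi.add_apply]
    rw [hf lam hlam, mul_add]
  · -- holomorphic extension
    set h : ℝ → ℂ := Set.indicator (Ici C) (fun t : ℝ => g (-t)) with hh
    have hmell : ∀ s : ℂ, mellin h (1 - s)
        = ∫ lam in Iic (-C), ((|lam| : ℝ) : ℂ) ^ (-s) * g lam := by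
      intro s
      rw [mellin]
      have e1 : (fun t : ℝ => (t : ℂ) ^ (1 - s - 1) • h t)
          = Set.indicator (Ici C) (fun t : ℝ => (t : ℂ) ^ (-s) * g (-t)) := by
        ext t
        rw [show (1 : ℂ) - s - 1 = -s by ring, smul_eq_mul]
        by_cases ht : t ∈ Ici C
        · rw [hh, Set.indicator_of_mem ht, Set.indicator_of_mem ht]
        · rw [hh, Set.indicator_of_notMem ht, Set.indicator_of_notMem ht, mul_zero]
      have hsub : Ici C ∩ Ioi (0:ℝ) = Ici C :=
        inter_eq_left.2 fun x hx => mem_Ioi.2 (lt_of_lt_of_le hC0 hx)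
      rw [e1, integral_indicator measurableSet_Ici,
        Measure.restrict_restrict measurableSet_Ici, hsub,
        integral_Ici_eq_integral_Ioi]
      rw [← integral_comp_neg_Ioi]
      apply setIntegral_congr_fun measurableSet_Ioi
      intro t ht
      have he : |(-t)| = t := by rw [abs_neg, abs_of_pos (lt_trans hC0 ht)]
      show ((t : ℂ) ^ (-s) * g (-t) : ℂ) = ((|(-t)| : ℝ) : ℂ) ^ (-s) * g (-t)
      rw [he]
    have hint : Integrable h := aux_indicator_comp_neg hgint
    have hloc : LocallyIntegrableOn h (Ioi 0) volume :=
      hint.locallyIntegrable.locallyIntegrableOn _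
    have htop : h =O[atTop] fun x : ℝ => x ^ (-(2:ℝ)) := by
      rcases hgO.isBigOWith with ⟨c, hc⟩
      rw [isBigOWith_iff] at hc
      rcases eventually_atBot.1 hc with ⟨A, hA⟩
      apply isBigO_iff.2 ⟨c, ?_⟩
      filter_upwards [eventually_ge_atTop (max C (-A))] with t ht
      have htC : C ≤ t := le_trans (le_max_left _ _) ht
      have htA : -t ≤ A := by
        have := le_trans (le_max_right _ _) ht; linarith
      have hpos : 0 < t := lt_of_lt_of_le hC0 htC
      rw [hh, Set.indicator_of_mem (mem_Ici.2 htC)]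
      have hb := hA (-t) htA
      have he : ‖1/(-t)^2‖ = ‖t ^ (-(2:ℝ))‖ := by
        rw [Real.rpow_neg hpos.le, Real.norm_eq_abs, Real.norm_eq_abs,
          show ((2:ℝ)) = ((2:ℕ):ℝ) by norm_num, Real.rpow_natCast]
        rw [neg_sq, one_div]
      rw [← he]
      exact hb
    have hdiff : ∀ s : ℂ, -1 < s.re →
        DifferentiableAt ℂ (fun z : ℂ => mellin h (1 - z)) s := by
      intro s hs
      have hbot : h =O[𝓝[>] (0:ℝ)] fun x : ℝ => x ^ (-(-s.re)) := by
        have hzero : h =ᶠ[𝓝[>] (0:ℝ)] (fun _ => 0) := by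
          filter_upwards [Ioo_mem_nhdsGT_of_mem (⟨le_refl (0:ℝ), hC0⟩ : (0:ℝ) ∈ Ico 0 C)]
            with t ht
          rw [hh, Set.indicator_of_notMem (by simp [mem_Ici]; linarith [ht.2])]
        exact hzero.trans_isBigO (isBigO_zero _ _)
      have hm : DifferentiableAt ℂ (mellin h) (1 - s) :=
        mellin_differentiableAt_of_isBigO_rpow hloc htop
          (by simp only [Complex.sub_re, Complex.one_re]; linarith)
          hbot (by simp only [Complex.sub_re, Complex.one_re]; linarith)
      exact hm.comp s ((differentiableAt_const (1:ℂ)).sub differentiableAt_id)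
    have hφdiff : Differentiable ℂ (fun z : ℂ => Complex.sin (↑π * z) / ↑π) :=
      (Complex.differentiable_sin.comp ((differentiable_id.const_mul _))).div_const _
    refine ⟨fun s => Complex.sin (↑π * s) / ↑π * mellin h (1 - s), ?_, ?_, ?_, ?_⟩
    · intro s hs
      exact ((hφdiff s).mul (hdiff s hs)).differentiableWithinAt
    · intro s hs
      show Complex.sin (↑π * s) / ↑π * mellin h (1 - s)
        = Complex.sin (↑π * s) / ↑π * ∫ lam in Iic (-C), ((|lam| : ℝ) : ℂ) ^ (-s) * g lam
      rw [hmell s]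
    · simp [mul_zero, Complex.sin_zero]
    · have hM : DifferentiableAt ℂ (fun z : ℂ => mellin h (1 - z)) 0 :=
        hdiff 0 (by norm_num)
      have hφ : HasDerivAt (fun z : ℂ => Complex.sin (↑π * z) / ↑π) 1 0 := by
        have h1 : HasDerivAt (fun z : ℂ => (↑π : ℂ) * z) (↑π : ℂ) 0 := by
          simpa using (hasDerivAt_id (0:ℂ)).const_mul (↑π : ℂ)
        have h2 := (Complex.hasDerivAt_sin ((↑π : ℂ) * 0)).comp 0 h1
        have h3 := h2.div_const (↑π : ℂ)
        refine h3.congr_deriv ?_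
        rw [mul_zero, Complex.cos_zero, one_mul,
          div_self (Complex.ofReal_ne_zero.2 hπ)]
      have hd := hφ.fun_mul hM.hasDerivAt
      rw [hd.deriv]
      rw [mul_zero, Complex.sin_zero, zero_div, zero_mul, add_zero, one_mul]
      rw [hmell 0]
      apply setIntegral_congr_fun measurableSet_Iic
      intro lam _
      show ((|lam| : ℝ) : ℂ) ^ (-(0:ℂ)) * g lam = g lam
      rw [neg_zero, Complex.cpow_zero, one_mul]
end
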